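/- Let p ∈ [1,∞). For every ρ > 2^{−1/p} there exist m ∈ ℕ and constant sequences y^{−m},…,y^{m} ∈ ℓ^∞ (namely (y^k)_j = λ_k for all j, where λ_k = k·2^{−1/p}/m) such that every x ∈ ℓ^p with ‖x‖_{ℓ^p} ≤ 1 satisfies ‖x − y^k‖_{ℓ^∞} < ρ for some k ∈ {−m,…,m}. Consequently, the ball measure of non-compactness of the identity embedding I : ℓ^p → ℓ^∞ is at most 2^{−1/p} < 1 = ‖I‖, so I is not maximally non-compact. -/

import Mathlib

open scoped ENNReal NNReal

/-!
Put `λ = 2^{-1/p}`. If `‖x‖_p ≤ 1`, then any two distinct coordinates satisfy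
`|x_i|^p + |x_j|^p ≤ 1`, so by the power mean inequality `|x_i| + |x_j| ≤ 2λ`.
Hence the sequence lies in an interval `[t - λ, t + λ]` whose centre `t` satisfies `|t| ≤ λ`,
and replacing `t` by the nearest point of the grid `λ k / m`, `|k| ≤ m`, costs at most `λ / 2m`.
-/

/-- The `ℓ^p` (quasi)norm of a real sequence, `(∑_j |x_j|^p)^{1/p}`, valued in `ℝ≥0∞`. -/
noncomputable def seqLpNorm (p : ℝ) (x : ℕ → ℝ) : ℝ≥0∞ :=
  (∑' j, (‖x j‖₊ : ℝ≥0∞) ^ p) ^ (1 / p)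

/-- The `ℓ^∞` norm of a real sequence, `sup_j |x_j|`, valued in `ℝ≥0∞`. -/
noncomputable def seqSupNorm (x : ℕ → ℝ) : ℝ≥0∞ :=
  ⨆ j, (‖x j‖₊ : ℝ≥0∞)

lemma add_le_two_mul_two_rpow_of_rpow_add_rpow_le_one {p a b : ℝ} (hp : 1 ≤ p)
    (ha : 0 ≤ a) (hb : 0 ≤ b) (hab : a ^ p + b ^ p ≤ 1) :
    a + b ≤ 2 * (2 : ℝ) ^ (-(1 / p)) := by
  have hp0 : 0 < p := zero_lt_one.trans_le hp
  lift a to ℝ≥0 using ha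
  lift b to ℝ≥0 using hb
  have hmean : ((1 / 2 : ℝ≥0) * a + (1 / 2) * b) ^ p ≤ (1 / 2) * a ^ p + (1 / 2) * b ^ p :=
    NNReal.rpow_arith_mean_le_arith_mean2_rpow _ _ _ _ (add_halves 1) hp
  have hmid : ((a + b) / 2 : ℝ) ^ p ≤ ((2 : ℝ) ^ (-(1 / p))) ^ p := by
    rw [← Real.rpow_mul zero_le_two, neg_mul, one_div_mul_cancel hp0.ne', Real.rpow_neg_one]
    have := NNReal.coe_le_coe.2 hmean
    push_cast at this
    rw [show ((a + b) / 2 : ℝ) = 1 / 2 * a + 1 / 2 * b by ring]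
    linarith
  have := (Real.rpow_le_rpow_iff (by positivity) (by positivity) hp0).1 hmid
  linarith

lemma seqLpNorm_le_one_iff {p : ℝ} (hp : 0 < p) {x : ℕ → ℝ} :
    seqLpNorm p x ≤ 1 ↔ ∑' j, (‖x j‖₊ : ℝ≥0∞) ^ p ≤ 1 := by
  rw [seqLpNorm, one_div, ENNReal.rpow_inv_le_iff hp, ENNReal.one_rpow]

lemma abs_rpow_add_abs_rpow_le_one_of_seqLpNorm_le_one {p : ℝ} (hp : 0 < p) {x : ℕ → ℝ}
    (hx : seqLpNorm p x ≤ 1) {i j : ℕ} (hij : i ≠ j) : |x i| ^ p + |x j| ^ p ≤ 1 := by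
  have hpair := (ENNReal.sum_le_tsum {i, j}).trans ((seqLpNorm_le_one_iff hp).1 hx)
  rw [Finset.sum_pair hij] at hpair
  simp only [← enorm_eq_nnnorm, Real.enorm_eq_ofReal_abs,
    ENNReal.ofReal_rpow_of_nonneg (abs_nonneg _) hp.le] at hpair
  rwa [← ENNReal.ofReal_add (by positivity) (by positivity), ENNReal.ofReal_le_one] at hpair

/-- The centre is the midpoint of `inf x` and `sup x`; taking `i ≠ j` is what bounds
`|sup x + inf x|` by `2 * r` (a single coordinate may have `|x i| > r`). -/
theorem exists_abs_le_and_abs_sub_le {ι : Type*} [Nontrivial ι] {x : ι → ℝ} {r : ℝ}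
    (h : ∀ i j, i ≠ j → |x i| + |x j| ≤ 2 * r) : ∃ t, |t| ≤ r ∧ ∀ i, |x i - t| ≤ r := by
  have hbound : ∀ i, |x i| ≤ 2 * r := fun i => by
    obtain ⟨j, hj⟩ := exists_ne i
    linarith [h i j hj.symm, abs_nonneg (x j)]
  have hA : BddAbove (Set.range x) :=
    ⟨2 * r, Set.forall_mem_range.2 fun i => (abs_le.1 (hbound i)).2⟩
  have hB : BddBelow (Set.range x) :=
    ⟨-(2 * r), Set.forall_mem_range.2 fun i => (abs_le.1 (hbound i)).1⟩
  set M := ⨆ i, x i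
  set μ := ⨅ i, x i
  have hxM : ∀ i, x i ≤ M := le_ciSup hA
  have hμx : ∀ i, μ ≤ x i := ciInf_le hB
  have hsup_add : M ≤ 2 * r - μ := ciSup_le fun i => by
    obtain ⟨j, hj⟩ := exists_ne i
    linarith [hμx j, h i j hj.symm, le_abs_self (x i), le_abs_self (x j)]
  have hinf_add : -(2 * r) - M ≤ μ := le_ciInf fun i => by
    obtain ⟨j, hj⟩ := exists_ne i
    linarith [hxM j, h i j hj.symm, neg_abs_le (x i), neg_abs_le (x j)]
  have hsup_sub : M ≤ μ + 2 * r := ciSup_le fun i => by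
    have : x i - 2 * r ≤ μ := le_ciInf fun j => by
      rcases eq_or_ne i j with rfl | hij
      · linarith [hbound i, abs_nonneg (x i)]
      · linarith [h i j hij, le_abs_self (x i), neg_abs_le (x j)]
    linarith
  exact ⟨(M + μ) / 2, abs_le.2 ⟨by linarith, by linarith⟩,
    fun i => abs_le.2 ⟨by linarith [hμx i], by linarith [hxM i]⟩⟩

lemma exists_int_abs_le_abs_sub_mul_div_le {t r : ℝ} (hr : 0 < r) (ht : |t| ≤ r) {m : ℕ}
    (hm : 0 < m) : ∃ k : ℤ, |k| ≤ m ∧ |t - k * r / m| ≤ r / m / 2 := by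
  have hm' : (0 : ℝ) < m := Nat.cast_pos.2 hm
  set z := t * m / r
  have hz : |z| ≤ m := by
    rw [abs_div, abs_mul, Nat.abs_cast, abs_of_pos hr, div_le_iff₀ hr]
    nlinarith
  refine ⟨round z, ?_, ?_⟩
  · have hround : |(round z : ℝ)| < m + 1 := calc
      |(round z : ℝ)| = |z - (z - round z)| := by ring_nf
      _ ≤ |z| + |z - round z| := abs_sub _ _
      _ < m + 1 := by linarith [abs_sub_round z]
    have : |round z| < m + 1 := by exact_mod_cast hround
    omega
  · have : t - round z * r / m = (z - round z) * (r / m) := by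
      simp only [z]
      field_simp
    rw [this, abs_mul, abs_of_pos (div_pos hr hm')]
    nlinarith [abs_sub_round z, div_pos hr hm']

lemma seqSupNorm_le_ofReal {x : ℕ → ℝ} {c : ℝ} (h : ∀ j, |x j| ≤ c) :
    seqSupNorm x ≤ ENNReal.ofReal c :=
  iSup_le fun j => by
    rw [← enorm_eq_nnnorm, Real.enorm_eq_ofReal_abs]
    exact ENNReal.ofReal_le_ofReal (h j)

/-- For `p ∈ [1,∞)` and every `ρ > 2^{−1/p}` there is an `m ∈ ℕ`, `m > 0`,
such that the constant sequences `y^k` with value `λ_k = k·2^{−1/p}/m`, `k = −m,…,m`,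
have the property that every `x ∈ ℓ^p` with `‖x‖_{ℓ^p} ≤ 1` satisfies
`‖x − y^k‖_{ℓ^∞} < ρ` for some `k`. Consequently the ball measure of non-compactness of
`I : ℓ^p → ℓ^∞` is at most `2^{−1/p} < 1 = ‖I‖`, so `I` is not maximally non-compact. -/
theorem lp_into_linfty_covering (p : ℝ) (hp : 1 ≤ p)
    (ρ : ℝ) (hρ : (2 : ℝ) ^ (-(1 / p)) < ρ) :
    ∃ m : ℕ, 0 < m ∧
      ∀ x : ℕ → ℝ, seqLpNorm p x ≤ 1 →
        ∃ k : ℤ, |k| ≤ (m : ℤ) ∧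
          seqSupNorm (fun j => x j - (k : ℝ) * (2 : ℝ) ^ (-(1 / p)) / (m : ℝ))
            < ENNReal.ofReal ρ := by
  set r := (2 : ℝ) ^ (-(1 / p))
  have hr : 0 < r := by positivity
  obtain ⟨m, hm⟩ := exists_nat_gt (r / (ρ - r))
  have hm0 : 0 < m := by
    have : 0 < r / (ρ - r) := div_pos hr (sub_pos.2 hρ)
    exact_mod_cast this.trans hm
  have hstep : r / m < ρ - r := by
    rwa [div_lt_iff₀ (by positivity), mul_comm, ← div_lt_iff₀ (sub_pos.2 hρ)]
  refine ⟨m, hm0, fun x hx => ?_⟩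
  obtain ⟨t, ht, hxt⟩ := exists_abs_le_and_abs_sub_le fun i j hij =>
    add_le_two_mul_two_rpow_of_rpow_add_rpow_le_one hp (abs_nonneg _) (abs_nonneg _)
      (abs_rpow_add_abs_rpow_le_one_of_seqLpNorm_le_one (zero_lt_one.trans_le hp) hx hij)
  obtain ⟨k, hk, htk⟩ := exists_int_abs_le_abs_sub_mul_div_le hr ht hm0
  refine ⟨k, hk, (seqSupNorm_le_ofReal fun j => ?_).trans_lt
    ((ENNReal.ofReal_lt_ofReal_iff (hr.trans hρ)).2 (?_ : r + r / m / 2 < ρ))⟩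
  · calc |x j - k * r / m| ≤ |x j - t| + |t - k * r / m| := abs_sub_le _ _ _
      _ ≤ r + r / m / 2 := add_le_add (hxt j) htk
  · linarith [div_pos hr (Nat.cast_pos.2 hm0 : (0 : ℝ) < m)]
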